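/- arXiv:1706.02265 — 2 statements merged into one kernel-verified Lean document; each statement's English description precedes it below -/
import Mathlib

section
/- Let ε > 0 be a real number and define [n] := sin(nπ/ε)/sin(π/ε) for positive integers n, where 0 < π/ε < π. If n is a positive integer with n ≤ ε/2, then [n] ≥ n/2. -/
open Real

theorem quantum_lower_bound (ε : ℝ) (hε : 0 < ε) (h1 : 0 < π / ε) (h2 : π / ε < π)
    (n : ℕ) (hn : 0 < n) (hne : (n : ℝ) ≤ ε / 2) :
    (n : ℝ) / 2 ≤ Real.sin (n * π / ε) / Real.sin (π / ε) := by
  have hπ := Real.pi_pos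
  have hn' : (0:ℝ) < n := by exact_mod_cast hn
  have hx : (0:ℝ) ≤ n * π / ε := by positivity
  have hx' : (n:ℝ) * π / ε ≤ π / 2 := by
    rw [div_le_div_iff₀ hε (by norm_num)]
    nlinarith
  have hlow : 2 / π * (n * π / ε) ≤ Real.sin (n * π / ε) := Real.mul_le_sin hx hx'
  have hs1 : Real.sin (π / ε) ≤ π / ε := Real.sin_le h1.le
  have hs2 : 0 < Real.sin (π / ε) := Real.sin_pos_of_pos_of_lt_pi h1 h2
  have key : 2 / π * (n * π / ε) / (π / ε) ≤ Real.sin (n * π / ε) / Real.sin (π / ε) :=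
    div_le_div₀ (le_trans (by positivity) hlow) hlow hs2 hs1
  have heq : 2 / π * (n * π / ε) / (π / ε) = 2 * n / π := by
    field_simp
  rw [heq] at key
  refine le_trans ?_ key
  rw [div_le_div_iff₀ (by norm_num) hπ]
  nlinarith [Real.pi_le_four]
end

section
/- Let k be a positive integer and set κ := π/(2(k+3)). For nonnegative integers x and s with s ≤ x and x < k/2, define D(s) := sin((x-s+1)κ)·sin((x+s+3)κ)·sin((2s+2)κ). Then D(0) ≤ D(x), i.e. sin((x+1)κ)·sin((x+3)κ)·sin(2κ) ≤ sin(κ)·sin((2x+3)κ)·sin((2x+2)κ). -/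
open Real

theorem so5_boundary_comparison (k : ℕ) (hk : 0 < k) (x s : ℕ) (hs : s ≤ x)
    (hx : (x : ℝ) < (k : ℝ) / 2) :
    Real.sin ((x + 1) * (π / (2 * (k + 3)))) * Real.sin ((x + 3) * (π / (2 * (k + 3)))) *
        Real.sin (2 * (π / (2 * (k + 3)))) ≤
      Real.sin (π / (2 * (k + 3))) * Real.sin ((2 * x + 3) * (π / (2 * (k + 3)))) *
        Real.sin ((2 * x + 2) * (π / (2 * (k + 3)))) := by
  set κ := π / (2 * ((k : ℝ) + 3)) with hκdef
  have hk3 : (0:ℝ) < (k : ℝ) + 3 := by positivity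
  have hκpos : 0 < κ := by
    rw [hκdef]; positivity
  -- 2x + 1 ≤ k
  have h2x : 2 * (x:ℝ) + 1 ≤ (k:ℝ) := by
    have hnat : 2 * x < k := by
      have : (2 * x : ℝ) < k := by push_cast; linarith
      exact_mod_cast this
    have : (2 * x + 1 : ℕ) ≤ k := hnat
    exact_mod_cast this
  -- all relevant angles are ≤ π/2
  have hbound : ∀ n : ℝ, n ≤ 2*(x:ℝ)+4 → n * κ ≤ π/2 := by
    intro n hn
    have hkκ : ((k:ℝ)+3) * κ = π/2 := by
      rw [hκdef]; field_simp
    have h1 : n * κ ≤ ((k:ℝ)+3) * κ := by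
      apply mul_le_mul_of_nonneg_right _ hκpos.le
      linarith
    linarith
  have hsin : ∀ n : ℝ, 0 ≤ n → n ≤ 2*(x:ℝ)+4 → 0 ≤ Real.sin (n * κ) := by
    intro n hn0 hn
    apply Real.sin_nonneg_of_nonneg_of_le_pi (by positivity)
    have := hbound n hn
    linarith [Real.pi_pos]
  have hcos : ∀ n : ℝ, 0 ≤ n → n ≤ 2*(x:ℝ)+4 → 0 ≤ Real.cos (n * κ) := by
    intro n hn0 hn
    apply Real.cos_nonneg_of_mem_Icc
    constructor
    · have : (0:ℝ) ≤ n * κ := by positivity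
      linarith [Real.pi_pos]
    · exact hbound n hn
  -- double angle identities
  have e1 : Real.sin (2 * κ) = 2 * Real.sin κ * Real.cos κ := Real.sin_two_mul κ
  have e2 : Real.sin ((2*(x:ℝ)+2) * κ) = 2 * Real.sin (((x:ℝ)+1)*κ) * Real.cos (((x:ℝ)+1)*κ) := by
    have h : (2*(x:ℝ)+2) * κ = 2 * (((x:ℝ)+1)*κ) := by ring
    rw [h, Real.sin_two_mul]
  -- product-to-sum
  have ha : 2 * (Real.cos (((x:ℝ)+1)*κ) * Real.sin ((2*(x:ℝ)+3)*κ))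
      = Real.sin ((3*(x:ℝ)+4)*κ) + Real.sin (((x:ℝ)+2)*κ) := by
    have h1 := Real.sin_add (((x:ℝ)+1)*κ) ((2*(x:ℝ)+3)*κ)
    have h2 := Real.sin_sub ((2*(x:ℝ)+3)*κ) (((x:ℝ)+1)*κ)
    have e : ((x:ℝ)+1)*κ + (2*(x:ℝ)+3)*κ = (3*(x:ℝ)+4)*κ := by ring
    have e' : (2*(x:ℝ)+3)*κ - ((x:ℝ)+1)*κ = ((x:ℝ)+2)*κ := by ring
    rw [e] at h1; rw [e'] at h2
    linarith
  have hb : 2 * (Real.cos κ * Real.sin (((x:ℝ)+3)*κ))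
      = Real.sin (((x:ℝ)+4)*κ) + Real.sin (((x:ℝ)+2)*κ) := by
    have h1 := Real.sin_add κ (((x:ℝ)+3)*κ)
    have h2 := Real.sin_sub (((x:ℝ)+3)*κ) κ
    have e : κ + ((x:ℝ)+3)*κ = ((x:ℝ)+4)*κ := by ring
    have e' : ((x:ℝ)+3)*κ - κ = ((x:ℝ)+2)*κ := by ring
    rw [e] at h1; rw [e'] at h2
    linarith
  -- monotonicity step : sin((x+4)κ) ≤ sin((3x+4)κ)
  have hmono : Real.sin (((x:ℝ)+4)*κ) ≤ Real.sin ((3*(x:ℝ)+4)*κ) := by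
    have h := Real.sin_sub_sin ((3*(x:ℝ)+4)*κ) (((x:ℝ)+4)*κ)
    have e : ((3*(x:ℝ)+4)*κ - ((x:ℝ)+4)*κ)/2 = (x:ℝ)*κ := by ring
    have e' : ((3*(x:ℝ)+4)*κ + ((x:ℝ)+4)*κ)/2 = (2*(x:ℝ)+4)*κ := by ring
    rw [e, e'] at h
    have hs1 : 0 ≤ Real.sin ((x:ℝ)*κ) := hsin x (by positivity) (by linarith)
    have hc1 : 0 ≤ Real.cos ((2*(x:ℝ)+4)*κ) := hcos (2*(x:ℝ)+4) (by positivity) le_rfl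
    nlinarith
  -- key inequality
  have key : Real.cos κ * Real.sin (((x:ℝ)+3)*κ)
      ≤ Real.cos (((x:ℝ)+1)*κ) * Real.sin ((2*(x:ℝ)+3)*κ) := by
    linarith
  -- assemble
  have hsκ : 0 ≤ Real.sin κ := by
    have := hsin 1 zero_le_one (by linarith)
    simpa using this
  have hA : 0 ≤ Real.sin (((x:ℝ)+1)*κ) := hsin ((x:ℝ)+1) (by positivity) (by linarith)
  have hκ1 : κ = 1 * κ := by ring
  have hmain : Real.sin (((x:ℝ)+1)*κ) * Real.sin (((x:ℝ)+3)*κ) * Real.sin (2*κ)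
      ≤ Real.sin κ * Real.sin ((2*(x:ℝ)+3)*κ) * Real.sin ((2*(x:ℝ)+2)*κ) := by
    rw [e1, e2]
    have h := mul_le_mul_of_nonneg_left key (mul_nonneg hsκ hA)
    nlinarith [h]
  push_cast
  convert hmain using 3 <;> push_cast <;> ring
end
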